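/- arXiv:2311.03102 — 3 statements merged into one kernel-verified Lean document; each statement's English description precedes it below -/
import Mathlib

section
/- Let μ, ξ, γ > 0 and define Λˢ(q) = ξ·√(q² + ξ/(2μ))·q² / D(q) where D(q) = 4μ²q²·√(q² + ξ/(2μ))·√(q² + ξ/μ) − (2μq² + ξ)². Then Λˢ(q) ≤ 0 for all real q, with equality only at q = 0. -/
noncomputable def Ddet (μ ξ q : ℝ) : ℝ :=
  4 * μ ^ 2 * q ^ 2 * Real.sqrt (q ^ 2 + ξ / (2 * μ)) * Real.sqrt (q ^ 2 + ξ / μ)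
    - (2 * μ * q ^ 2 + ξ) ^ 2

noncomputable def Λs (μ ξ q : ℝ) : ℝ :=
  ξ * Real.sqrt (q ^ 2 + ξ / (2 * μ)) * q ^ 2 / Ddet μ ξ q

/-! By AM–GM, `√a √b ≤ (a + b) / 2` with `a = q² + ξ/(2μ)`, `b = q² + ξ/μ`, so the first term of
`D(q)` is at most `4μ²q⁴ + 3μξq²`, which falls short of `(2μq² + ξ)² = 4μ²q⁴ + 4μξq² + ξ²` by
`μξq² + ξ² > 0`. Hence `D < 0`, and `Λˢ` is a nonnegative numerator, positive for `q ≠ 0`,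
over a negative denominator. -/

theorem Real.sqrt_mul_sqrt_le_add_div_two {a b : ℝ} (ha : 0 ≤ a) (hb : 0 ≤ b) :
    √a * √b ≤ (a + b) / 2 := by
  have := two_mul_le_add_sq √a √b
  rw [Real.sq_sqrt ha, Real.sq_sqrt hb] at this
  linarith

theorem Ddet_neg {μ ξ : ℝ} (hμ : 0 < μ) (hξ : 0 < ξ) (q : ℝ) : Ddet μ ξ q < 0 := by
  have h_amgm := Real.sqrt_mul_sqrt_le_add_div_two
    (by positivity : 0 ≤ q ^ 2 + ξ / (2 * μ)) (by positivity : 0 ≤ q ^ 2 + ξ / μ)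
  calc Ddet μ ξ q
      ≤ 4 * μ ^ 2 * q ^ 2 * ((q ^ 2 + ξ / (2 * μ) + (q ^ 2 + ξ / μ)) / 2)
        - (2 * μ * q ^ 2 + ξ) ^ 2 := by
        rw [Ddet, mul_assoc _ √_]
        gcongr
    _ = -(μ * ξ * q ^ 2 + ξ ^ 2) := by field_simp; ring
    _ < 0 := neg_neg_of_pos (by positivity)

theorem Λs_neg_of_ne_zero {μ ξ q : ℝ} (hμ : 0 < μ) (hξ : 0 < ξ) (hq : q ≠ 0) :
    Λs μ ξ q < 0 :=
  div_neg_of_pos_of_neg (by positivity) (Ddet_neg hμ hξ q)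

theorem Λs_nonpos_general (μ ξ : ℝ) (hμ : 0 < μ) (hξ : 0 < ξ) (q : ℝ) :
    Λs μ ξ q ≤ 0 ∧ (Λs μ ξ q = 0 → q = 0) := by
  by_cases hq : q = 0
  · simp [Λs, hq]
  · have := Λs_neg_of_ne_zero hμ hξ hq
    exact ⟨this.le, fun h => absurd h this.ne⟩

/-- The surface tension growth-rate contribution Λˢ is nonpositive, vanishing only at q = 0. -/
theorem Λs_nonpos (μ ξ γ : ℝ) (hμ : 0 < μ) (hξ : 0 < ξ) (hγ : 0 < γ) (q : ℝ) :
    Λs μ ξ q ≤ 0 ∧ (Λs μ ξ q = 0 → q = 0) :=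
  Λs_nonpos_general μ ξ hμ hξ q
end

section
/- Let μ, ξ, γ > 0 and define Λˢ(q) = ξ·√(q² + ξ/(2μ))·q² / D(q) with D(q) = 4μ²q²√(q² + ξ/(2μ))·√(q² + ξ/μ) − (2μq² + ξ)². Then Λˢ(q) + |q|/μ = O(1/|q|) as |q| → ∞; i.e., there exist constants C, Q > 0 such that |Λˢ(q) + |q|/μ| ≤ C/|q| for all |q| ≥ Q. -/
set_option maxHeartbeats 1600000 in
/-- Asymptotics of the surface-tension growth rate: Λˢ(q) + |q|/μ = O(1/|q|). -/
theorem Λs_asymptotics (μ ξ γ : ℝ) (hμ : 0 < μ) (hξ : 0 < ξ) (hγ : 0 < γ) :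
    ∃ C Q : ℝ, 0 < C ∧ 0 < Q ∧ ∀ q : ℝ, Q ≤ |q| →
      |Λs μ ξ q + |q| / μ| ≤ C / |q| := by
  have hμ' : μ ≠ 0 := hμ.ne'
  obtain ⟨a, ha⟩ : ∃ a : ℝ, ξ = 2 * μ * a := ⟨ξ / (2 * μ), by field_simp⟩
  have ha0 : 0 < a := by
    rcases lt_trichotomy a 0 with h | h | h
    · nlinarith
    · nlinarith
    · exact h
  refine ⟨3 * a / μ, 1 + a, by positivity, by positivity, fun q hq => ?_⟩
  have hq0 : (0:ℝ) < |q| := lt_of_lt_of_le (by positivity) hq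
  have hqt : |q| ^ 2 = q ^ 2 := sq_abs q
  have ht0 : (0:ℝ) < q ^ 2 := by rw [← hqt]; positivity
  have hta : a ≤ q ^ 2 := by nlinarith
  have e1 : q ^ 2 + ξ / (2 * μ) = q ^ 2 + a := by rw [ha]; field_simp
  have e2 : q ^ 2 + ξ / μ = q ^ 2 + 2 * a := by rw [ha]; field_simp
  set s1 := Real.sqrt (q ^ 2 + a) with hs1_def
  set s2 := Real.sqrt (q ^ 2 + 2 * a) with hs2_def
  have hs1 : 0 ≤ s1 := Real.sqrt_nonneg _
  have hs2 : 0 ≤ s2 := Real.sqrt_nonneg _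
  have hs1sq : s1 ^ 2 = q ^ 2 + a := Real.sq_sqrt (by positivity)
  have hs2sq : s2 ^ 2 = q ^ 2 + 2 * a := Real.sq_sqrt (by positivity)
  have h12sq : (s1 * s2) ^ 2 = (q ^ 2 + a) * (q ^ 2 + 2 * a) := by
    rw [mul_pow, hs1sq, hs2sq]
  clear_value s1 s2
  -- bounds on s1
  have hs1_ge : |q| ≤ s1 := by nlinarith [hs1sq, hs1, abs_nonneg q, hqt]
  have hs1_le : 2 * |q| * s1 ≤ 2 * q ^ 2 + a := by
    nlinarith [mul_nonneg (abs_nonneg q) hs1, hs1sq, hqt, ht0]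
  have hs1_ge' : 2 * q ^ 2 ≤ 2 * |q| * s1 := by nlinarith [hs1_ge, hq0, hqt]
  -- bounds on s1 * s2
  have h12_le : 2 * (s1 * s2) ≤ 2 * q ^ 2 + 3 * a := by
    nlinarith [h12sq, mul_nonneg hs1 hs2, ha0, ht0]
  have h12_ge : 8 * q ^ 4 + 12 * a * q ^ 2 - a ^ 2 ≤ 8 * q ^ 2 * (s1 * s2) := by
    have hR : 0 ≤ 8 * q ^ 2 * (s1 * s2) := by positivity
    have hsq : (8 * q ^ 2 * (s1 * s2)) ^ 2 = 64 * q ^ 4 * ((q ^ 2 + a) * (q ^ 2 + 2 * a)) := by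
      rw [mul_pow, h12sq]; ring
    have hcube : a ^ 3 * a ≤ a ^ 3 * q ^ 2 :=
      mul_le_mul_of_nonneg_left hta (by positivity)
    have hsqle : (8 * q ^ 4 + 12 * a * q ^ 2 - a ^ 2) ^ 2 ≤ (8 * q ^ 2 * (s1 * s2)) ^ 2 := by
      have key : (8 * q ^ 2 * (s1 * s2)) ^ 2 - (8 * q ^ 4 + 12 * a * q ^ 2 - a ^ 2) ^ 2
          = 24 * a ^ 3 * q ^ 2 - a ^ 4 := by rw [hsq]; ring
      have hpos : 0 ≤ a ^ 3 * q ^ 2 := by positivity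
      linarith [hcube, hpos]
    have h := Real.sqrt_le_sqrt hsqle
    rw [Real.sqrt_sq_eq_abs, Real.sqrt_sq hR] at h
    exact le_trans (le_abs_self _) h
  -- rewrite D
  set D := Ddet μ ξ q with hD_def
  have hD_eq : D = 4 * μ ^ 2 * q ^ 2 * (s1 * s2) - (2 * μ * q ^ 2 + 2 * μ * a) ^ 2 := by
    rw [hD_def, Ddet, e1, e2, ← hs1_def, ← hs2_def, ha]; ring
  clear_value D
  have hD_le : D ≤ -(2 * μ ^ 2 * a * q ^ 2) - 4 * μ ^ 2 * a ^ 2 := by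
    rw [hD_eq]
    linarith [mul_le_mul_of_nonneg_left h12_le (by positivity : (0:ℝ) ≤ 2 * μ ^ 2 * q ^ 2)]
  have hD_ge : -(2 * μ ^ 2 * a * q ^ 2) - (9/2) * μ ^ 2 * a ^ 2 ≤ D := by
    rw [hD_eq]
    linarith [mul_le_mul_of_nonneg_left h12_ge (by positivity : (0:ℝ) ≤ μ ^ 2 / 2)]
  have hD_neg : D < 0 := by
    have h1 : (0:ℝ) < 2 * μ ^ 2 * a * q ^ 2 := by positivity
    have h2 : (0:ℝ) < 4 * μ ^ 2 * a ^ 2 := by positivity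
    linarith [hD_le]
  have hD_ne : D ≠ 0 := hD_neg.ne
  -- numerator
  set N := 2 * μ ^ 2 * a * q ^ 2 * s1 + |q| * D with hN_def
  clear_value N
  have h1 : 2 * |q| * N = 2 * μ ^ 2 * a * q ^ 2 * (2 * |q| * s1) + 2 * q ^ 2 * D := by
    rw [hN_def]; linear_combination (2 * D) * hqt
  have hN_le : N ≤ 0 := by
    have h2 : 2 * |q| * N ≤ -(6 * μ ^ 2 * a ^ 2 * q ^ 2) := by
      linarith [h1,
        mul_le_mul_of_nonneg_left hs1_le (by positivity : (0:ℝ) ≤ 2 * μ ^ 2 * a * q ^ 2),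
        mul_le_mul_of_nonneg_left hD_le (by positivity : (0:ℝ) ≤ 2 * q ^ 2)]
    by_contra h
    push_neg at h
    have hp : (0:ℝ) < 2 * |q| * N := mul_pos (mul_pos two_pos hq0) h
    have hneg : (0:ℝ) < 6 * μ ^ 2 * a ^ 2 * q ^ 2 := by positivity
    linarith [h2]
  have hN_ge : -((9/2) * μ ^ 2 * a ^ 2 * |q|) ≤ N := by
    have h2 : -(9 * μ ^ 2 * a ^ 2 * q ^ 2) ≤ 2 * |q| * N := by
      linarith [h1,
        mul_le_mul_of_nonneg_left hs1_ge' (by positivity : (0:ℝ) ≤ 2 * μ ^ 2 * a * q ^ 2),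
        mul_le_mul_of_nonneg_left hD_ge (by positivity : (0:ℝ) ≤ 2 * q ^ 2)]
    by_contra h
    push_neg at h
    have h8 := mul_lt_mul_of_pos_left h (mul_pos two_pos hq0)
    have h9 : 2 * |q| * -((9/2) * μ ^ 2 * a ^ 2 * |q|) = -(9 * μ ^ 2 * a ^ 2 * q ^ 2) := by
      rw [← hqt]; ring
    linarith [h2, h8, h9]
  -- key identity
  have hkey : Λs μ ξ q + |q| / μ = N / (μ * D) := by
    rw [hN_def, Λs, ← hD_def, e1, ← hs1_def, ha,
      div_add_div _ _ hD_ne hμ',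
      div_eq_div_iff (mul_ne_zero hD_ne hμ') (mul_ne_zero hμ' hD_ne)]
    ring
  rw [hkey, abs_div]
  have habsμD : |μ * D| = μ * (-D) := by
    rw [abs_mul, abs_of_pos hμ, abs_of_neg hD_neg]
  rw [habsμD, abs_of_nonpos hN_le]
  rw [div_le_div_iff₀ (by nlinarith [mul_pos hμ (neg_pos.mpr hD_neg)]) hq0]
  have h3 : 3 * a / μ * (μ * -D) = 3 * a * (-D) := by
    rw [div_mul_eq_mul_div, mul_comm μ (-D), ← mul_assoc, mul_div_assoc, div_self hμ', mul_one]
  rw [h3]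
  have h4 : -N ≤ (9/2) * μ ^ 2 * a ^ 2 * |q| := by linarith [hN_ge]
  have hNq : -N * |q| ≤ (9/2) * μ ^ 2 * a ^ 2 * q ^ 2 := by
    have h10 := mul_le_mul_of_nonneg_right h4 (abs_nonneg q)
    have h11 : (9/2) * μ ^ 2 * a ^ 2 * |q| * |q| = (9/2) * μ ^ 2 * a ^ 2 * q ^ 2 := by
      rw [← hqt]; ring
    linarith [h10, h11]
  have h5 := mul_le_mul_of_nonneg_left hD_le (by positivity : (0:ℝ) ≤ 3 * a)
  have h6 : (0:ℝ) ≤ μ ^ 2 * a ^ 2 * q ^ 2 := by positivity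
  have h7 : (0:ℝ) ≤ μ ^ 2 * a ^ 3 := by positivity
  linarith [hNq, h5, h6, h7]
end

section
/- Let μ, ξ > 0 and define Λᶜ(q) by formula (Λc): Λᶜ(q) = [ξ√(q²+ξ/(2μ)) / (D(q)(√(q²+1)+1+√(q²+ξ/(2μ))))]·(q² − 2√(q²+1) − 2 + 2q⁴/((√(q²+1)+1+√(q²+ξ/μ))(√(q²+ξ/(2μ))+√(q²+ξ/μ)))) + [ξ√(q²+ξ/(2μ))/D(q)]·(ξ/(4μ+√(2μξ)) + 2 − q²/(√(q²+ξ/(2μ))+√(q²+ξ/μ))), with D(q) = 4μ²q²√(q²+ξ/(2μ))√(q²+ξ/μ) − (2μq²+ξ)². Then Λᶜ(q) → −1/(4μ) as |q| → ∞. -/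
noncomputable def Λc (μ ξ q : ℝ) : ℝ :=
  ξ * Real.sqrt (q ^ 2 + ξ / (2 * μ)) /
    (Ddet μ ξ q * (Real.sqrt (q ^ 2 + 1) + 1 + Real.sqrt (q ^ 2 + ξ / (2 * μ)))) *
    (q ^ 2 - 2 * Real.sqrt (q ^ 2 + 1) - 2 +
      2 * q ^ 4 /
        ((Real.sqrt (q ^ 2 + 1) + 1 + Real.sqrt (q ^ 2 + ξ / μ)) *
          (Real.sqrt (q ^ 2 + ξ / (2 * μ)) + Real.sqrt (q ^ 2 + ξ / μ))))
  + ξ * Real.sqrt (q ^ 2 + ξ / (2 * μ)) / Ddet μ ξ q *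
    (ξ / (4 * μ + Real.sqrt (2 * μ * ξ)) + 2 -
      q ^ 2 / (Real.sqrt (q ^ 2 + ξ / (2 * μ)) + Real.sqrt (q ^ 2 + ξ / μ)))

/-!
Put `a, b, R` for `√(q² + ξ/(2μ))`, `√(q² + ξ/μ)`, `√(q² + 1)`. Each of them is
`|q| + O(1/|q|)`, so after dividing by the right power of `|q|` every piece of `Λᶜ` has an
obvious limit except `D(q)`, where the leading terms `4μ²q⁴` cancel. There one uses
`a b - q² → (ξ/(2μ) + ξ/μ)/2 = 3ξ/(4μ)`, which gives `D(q)/q² → 3μξ - 4μξ = -μξ`.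
The two summands of `Λᶜ` then tend to `-3/(4μ)` and `1/(2μ)`.
-/

open Filter Topology

lemma tendsto_sqrt_add_div_sqrt_atTop (c : ℝ) :
    Tendsto (fun x => √(x + c) / √x) atTop (𝓝 1) := by
  have h : Tendsto (fun x : ℝ => √(1 + c * x⁻¹)) atTop (𝓝 1) := by
    simpa using ((tendsto_inv_atTop_zero.const_mul c).const_add 1).sqrt
  refine h.congr' ?_
  filter_upwards [eventually_gt_atTop 0] with x hx
  rw [← Real.sqrt_div' _ hx.le]
  congr 1
  field_simp

lemma tendsto_sqrt_add_mul_sqrt_add_sub_atTop (α β : ℝ) :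
    Tendsto (fun x => √(x + α) * √(x + β) - x) atTop (𝓝 ((α + β) / 2)) := by
  have hratio : Tendsto (fun x => √(x + α) * √(x + β) / x) atTop (𝓝 1) := by
    refine ((tendsto_sqrt_add_div_sqrt_atTop α).mul
      (tendsto_sqrt_add_div_sqrt_atTop β)).congr' ?_ |>.trans (by rw [mul_one])
    filter_upwards [eventually_gt_atTop 0] with x hx
    rw [div_mul_div_comm, Real.mul_self_sqrt hx.le]
  -- `s - x = (s² - x²) / (s + x)` for `s = √(x + α) √(x + β)`, divided through by `x`
  have h : Tendsto (fun x => (α + β + α * β * x⁻¹) / (√(x + α) * √(x + β) / x + 1)) atTop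
      (𝓝 ((α + β) / 2)) := by
    have := ((tendsto_inv_atTop_zero.const_mul (α * β)).const_add (α + β)).div
      (hratio.add_const 1) (by norm_num)
    rwa [mul_zero, add_zero, one_add_one_eq_two] at this
  refine h.congr' ?_
  filter_upwards [eventually_gt_atTop (max 0 (max (-α) (-β)))] with x hx
  obtain ⟨hx, hxα, hxβ⟩ : 0 < x ∧ -α < x ∧ -β < x := by
    simpa only [max_lt_iff] using hx
  have hsq : (√(x + α) * √(x + β)) ^ 2 = (x + α) * (x + β) := by
    rw [mul_pow, Real.sq_sqrt (by linarith), Real.sq_sqrt (by linarith)]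
  rw [div_eq_iff (by positivity)]
  field_simp
  linear_combination -hsq

lemma eventually_ne_zero_comap_abs_atTop : ∀ᶠ q : ℝ in comap abs atTop, q ≠ 0 := by
  filter_upwards [tendsto_comap.eventually (eventually_gt_atTop 0)] with q hq
  exact abs_pos.mp hq

lemma tendsto_inv_abs_comap_abs_atTop :
    Tendsto (fun q : ℝ => |q|⁻¹) (comap abs atTop) (𝓝 0) :=
  tendsto_inv_atTop_zero.comp tendsto_comap

lemma tendsto_sq_comap_abs_atTop : Tendsto (fun q : ℝ => q ^ 2) (comap abs atTop) atTop := by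
  simpa only [Function.comp_def, sq_abs] using
    (tendsto_pow_atTop two_ne_zero).comp (tendsto_comap (f := (abs : ℝ → ℝ)))

lemma tendsto_sqrt_sq_add_div_abs (c : ℝ) :
    Tendsto (fun q : ℝ => √(q ^ 2 + c) / |q|) (comap abs atTop) (𝓝 1) := by
  simpa only [Function.comp_def, Real.sqrt_sq_eq_abs] using
    (tendsto_sqrt_add_div_sqrt_atTop c).comp tendsto_sq_comap_abs_atTop

lemma Ddet_div_sq (μ ξ : ℝ) {q : ℝ} (hq : q ≠ 0) :
    Ddet μ ξ q / q ^ 2 = 4 * μ ^ 2 * (√(q ^ 2 + ξ / (2 * μ)) * √(q ^ 2 + ξ / μ) - q ^ 2)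
      - 4 * μ * ξ - ξ ^ 2 * (|q|⁻¹) ^ 2 := by
  rw [inv_pow, sq_abs]
  unfold Ddet
  field_simp
  ring

lemma tendsto_Ddet_div_sq (μ ξ : ℝ) :
    Tendsto (fun q => Ddet μ ξ q / q ^ 2) (comap abs atTop) (𝓝 (-(μ * ξ))) := by
  have h := (((tendsto_sqrt_add_mul_sqrt_add_sub_atTop (ξ / (2 * μ)) (ξ / μ)).comp
    tendsto_sq_comap_abs_atTop).const_mul (4 * μ ^ 2)).sub_const (4 * μ * ξ) |>.sub
    ((tendsto_inv_abs_comap_abs_atTop.pow 2).const_mul (ξ ^ 2))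
  refine (h.congr' ?_).trans (le_of_eq ?_)
  · filter_upwards [eventually_ne_zero_comap_abs_atTop] with q hq
    exact (Ddet_div_sq μ ξ hq).symm
  · congr 1
    field_simp
    ring

lemma Λc_eq_of_ne_zero (μ ξ : ℝ) {q : ℝ} (hq : q ≠ 0) :
    Λc μ ξ q =
      let a := √(q ^ 2 + ξ / (2 * μ)) / |q|
      let b := √(q ^ 2 + ξ / μ) / |q|
      let R := √(q ^ 2 + 1) / |q|
      let D := Ddet μ ξ q / q ^ 2
      ξ * a / (D * (R + |q|⁻¹ + a)) *
          (1 - 2 * R * |q|⁻¹ - 2 * (|q|⁻¹) ^ 2 + 2 / ((R + |q|⁻¹ + b) * (a + b)))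
        + ξ * a / D * ((ξ / (4 * μ + √(2 * μ * ξ)) + 2) * |q|⁻¹ - 1 / (a + b)) := by
  have hr : |q| ≠ 0 := abs_ne_zero.mpr hq
  have hq2 : q ^ 2 = |q| ^ 2 := (sq_abs q).symm
  have hq4 : q ^ 4 = |q| ^ 4 := (Even.pow_abs ⟨2, rfl⟩ q).symm
  simp only [Λc]
  rw [hq2, hq4]
  field_simp

lemma tendsto_Λc {μ ξ : ℝ} (hμ : μ ≠ 0) (hξ : ξ ≠ 0) :
    Tendsto (Λc μ ξ) (comap abs atTop) (𝓝 (-1 / (4 * μ))) := by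
  have ha := tendsto_sqrt_sq_add_div_abs (ξ / (2 * μ))
  have hb := tendsto_sqrt_sq_add_div_abs (ξ / μ)
  have hR := tendsto_sqrt_sq_add_div_abs 1
  have hi := tendsto_inv_abs_comap_abs_atTop
  have hD := tendsto_Ddet_div_sq μ ξ
  have hD0 : -(μ * ξ) ≠ 0 := neg_ne_zero.mpr (mul_ne_zero hμ hξ)
  have hξa := ha.const_mul ξ
  have hN₁ := (((tendsto_const_nhds (x := (1 : ℝ))).sub ((hR.const_mul 2).mul hi)).sub
    ((hi.pow 2).const_mul 2)).add ((tendsto_const_nhds (x := (2 : ℝ))).div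
      (((hR.add hi).add hb).mul (ha.add hb)) (by norm_num))
  have hN₂ := (hi.const_mul (ξ / (4 * μ + √(2 * μ * ξ)) + 2)).sub
    ((tendsto_const_nhds (x := (1 : ℝ))).div (ha.add hb) (by norm_num))
  have hlim := ((hξa.div (hD.mul ((hR.add hi).add ha)) (mul_ne_zero hD0 (by norm_num))).mul
    hN₁).add ((hξa.div hD hD0).mul hN₂)
  refine (hlim.congr' ?_).trans (le_of_eq ?_)
  · filter_upwards [eventually_ne_zero_comap_abs_atTop] with q hq
    exact (Λc_eq_of_ne_zero μ ξ hq).symm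
  · congr 1
    field_simp
    ring

/-- Λᶜ(q) → −1/(4μ) as |q| → ∞. -/
theorem Λc_limit (μ ξ : ℝ) (hμ : 0 < μ) (hξ : 0 < ξ) :
    ∀ ε > (0 : ℝ), ∃ Q : ℝ, ∀ q : ℝ, Q ≤ |q| → |Λc μ ξ q + 1 / (4 * μ)| < ε := by
  intro ε hε
  obtain ⟨Q, -, hQ⟩ := (atTop_basis.comap abs).eventually_iff.mp
    (Metric.tendsto_nhds.mp (tendsto_Λc hμ.ne' hξ.ne') ε hε)
  refine ⟨Q, fun q hq => ?_⟩
  simpa [Real.dist_eq, neg_div] using hQ hq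
end
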